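/- One-step descent in Bregman divergence: under the SMD update ∇ψ(w_i) = ∇ψ(w_{i-1}) - η∇L_i(w_{i-1}), if ψ - ηL_i is convex, L_i is nonnegative, L_i(w) = 0, and D_{L_i}(w, w_{i-1}) ≥ 0, then D_ψ(w, w_i) ≤ D_ψ(w, w_{i-1}). -/

import Mathlib

open scoped RealInnerProductSpace

/-!
By the three-point identity for Bregman divergences and the update rule,
`D_ψ(w, w_{i-1}) - D_ψ(w, w_i) = D_ψ(w_i, w_{i-1}) - η ⟪∇L_i(w_{i-1}), w - w_i⟫`.
Splitting `D_ψ = D_{ψ - ηL_i} + η D_{L_i}` and regrouping the `L_i` terms, the right-hand side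
equals `D_{ψ - ηL_i}(w_i, w_{i-1}) + η L_i(w_i) + η D_{L_i}(w, w_{i-1}) - η L_i(w)`. The first
term is nonnegative by convexity of `ψ - ηL_i`, the next two by the hypotheses, and the last vanishes.
-/

theorem ConvexOn.add_fderiv_le {E : Type*} [NormedAddCommGroup E] [NormedSpace ℝ E]
    {s : Set E} {f : E → ℝ} {f' : E →L[ℝ] ℝ} {x y : E} (hf : ConvexOn ℝ s f)
    (hx : x ∈ s) (hy : y ∈ s) (hfx : HasFDerivAt f f' x) :
    f x + f' (y - x) ≤ f y := by
  set ℓ : ℝ →ᵃ[ℝ] E := AffineMap.lineMap x y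
  have hline : ConvexOn ℝ (ℓ ⁻¹' s) (f ∘ ℓ) := hf.comp_affineMap ℓ
  have hℓ0 : ℓ 0 = x := AffineMap.lineMap_apply_zero x y
  have hℓ1 : ℓ 1 = y := AffineMap.lineMap_apply_one x y
  have hderiv : HasDerivAt (f ∘ ℓ) (f' (y - x)) 0 :=
    (hℓ0 ▸ hfx).comp_hasDerivAt (0 : ℝ) AffineMap.hasDerivAt_lineMap
  have hslope := hline.le_slope_of_hasDerivAt (by simpa [hℓ0] using hx) (by simpa [hℓ1] using hy) zero_lt_one hderiv
  simp only [slope_def_field, Function.comp_apply, hℓ0, hℓ1, sub_zero, div_one] at hslope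
  linarith

section Bregman

variable {E : Type*} [NormedAddCommGroup E] [InnerProductSpace ℝ E] [CompleteSpace E]

noncomputable def bregmanDiv (F : E → ℝ) (x y : E) : ℝ :=
  F x - F y - ⟪gradient F y, x - y⟫

theorem ConvexOn.bregmanDiv_nonneg {s : Set E} {F : E → ℝ} {x y : E} (hF : ConvexOn ℝ s F)
    (hx : x ∈ s) (hy : y ∈ s) (hFy : DifferentiableAt ℝ F y) :
    0 ≤ bregmanDiv F x y := by
  have := hF.add_fderiv_le hy hx hFy.hasFDerivAt
  rw [← inner_gradient_left] at this
  unfold bregmanDiv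
  linarith

theorem bregmanDiv_sub_const_mul {F G : E → ℝ} {y : E} (hF : DifferentiableAt ℝ F y)
    (hG : DifferentiableAt ℝ G y) (c : ℝ) (x : E) :
    bregmanDiv (fun u => F u - c * G u) x y = bregmanDiv F x y - c * bregmanDiv G x y := by
  have hgrad : ⟪gradient (fun u => F u - c * G u) y, x - y⟫ =
      ⟪gradient F y, x - y⟫ - c * ⟪gradient G y, x - y⟫ := by
    simp only [inner_gradient_left, fderiv_fun_sub hF (hG.const_mul c), fderiv_const_mul hG,
      sub_apply, smul_apply, smul_eq_mul]
  unfold bregmanDiv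
  rw [hgrad]
  ring

theorem bregmanDiv_three_point (F : E → ℝ) (x y z : E) :
    bregmanDiv F x z - bregmanDiv F x y =
      bregmanDiv F y z + ⟪gradient F y - gradient F z, x - y⟫ := by
  unfold bregmanDiv
  have hsplit : x - z = (x - y) + (y - z) := by abel
  rw [hsplit, inner_add_right, inner_sub_left]
  ring

theorem bregmanDiv_sub_bregmanDiv_same_right (F : E → ℝ) (x y z : E) :
    bregmanDiv F x z - bregmanDiv F y z = F x - F y + ⟪gradient F z, y - x⟫ := by
  unfold bregmanDiv
  have hsplit : x - z = (x - y) + (y - z) := by abel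
  rw [hsplit, inner_add_right, ← neg_sub x y, inner_neg_right]
  ring

end Bregman

theorem smd_one_step_descent
    (p : ℕ) (ψ L : EuclideanSpace ℝ (Fin p) → ℝ)
    (hψ : Differentiable ℝ ψ) (hL : Differentiable ℝ L)
    (hLnonneg : ∀ u, 0 ≤ L u)
    (η : ℝ) (hη : 0 < η)
    (hconv : ConvexOn ℝ Set.univ (fun u => ψ u - η * L u))
    (wprev wi w : EuclideanSpace ℝ (Fin p))
    (hupdate : gradient ψ wi = gradient ψ wprev - η • gradient L wprev)
    (hw : L w = 0)
    (hDL : 0 ≤ L w - L wprev - ⟪gradient L wprev, w - wprev⟫) :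
    ψ w - ψ wi - ⟪gradient ψ wi, w - wi⟫ ≤
      ψ w - ψ wprev - ⟪gradient ψ wprev, w - wprev⟫ := by
  change bregmanDiv ψ w wi ≤ bregmanDiv ψ w wprev
  change 0 ≤ bregmanDiv L w wprev at hDL
  have hthree := bregmanDiv_three_point ψ w wi wprev
  rw [hupdate, sub_sub_cancel_left, inner_neg_left, real_inner_smul_left] at hthree
  have hsplit := bregmanDiv_sub_const_mul (hψ wprev) (hL wprev) η wi
  have hregroup := bregmanDiv_sub_bregmanDiv_same_right L wi w wprev
  have hconvex : 0 ≤ bregmanDiv (fun u => ψ u - η * L u) wi wprev :=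
    hconv.bregmanDiv_nonneg trivial trivial ((hψ wprev).sub ((hL wprev).const_mul η))
  have hdescent : bregmanDiv ψ w wprev - bregmanDiv ψ w wi =
      bregmanDiv (fun u => ψ u - η * L u) wi wprev + η * L wi + η * bregmanDiv L w wprev := by
    linear_combination hthree - hsplit + η * hregroup - η * hw
  linarith [mul_nonneg hη.le (hLnonneg wi), mul_nonneg hη.le hDL]
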